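/- arXiv:2010.01945 — 6 statements merged into one kernel-verified Lean document; each statement's English description precedes it below -/
import Mathlib

section
/- For a fixed nonzero quaternion p, the ℝ-linear map d ↦ p·conj(d) − d·conj(p) from ℍ to the space of pure quaternions (span of i, j, k) is surjective, and its kernel is the line spanned by p. -/
open Polynomial TrivSqZeroExt Quaternion

noncomputable section

/-- the ring of dual numbers 𝔻 = ℝ[ε]/⟨ε²⟩ -/
abbrev DD : Type := DualNumber ℝ
/-- the Hamiltonian quaternions ℍ -/
abbrev HH : Type := Quaternion ℝ
/-- the dual quaternions 𝔻ℍ, realized as quaternions over the dual numbers -/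
abbrev DH : Type := Quaternion DD

/-- embedding of the real quaternions into the dual quaternions -/
def ofQ (p : HH) : DH := ⟨inl p.re, inl p.imI, inl p.imJ, inl p.imK⟩

/-- ε as a dual quaternion -/
def εq : DH := ((DualNumber.eps : DD) : DH)

/-- primal part of a dual quaternion -/
def primal (q : DH) : HH := ⟨(q.re).fst, (q.imI).fst, (q.imJ).fst, (q.imK).fst⟩

/-- dual part of a dual quaternion -/
def dualPart (q : DH) : HH := ⟨(q.re).snd, (q.imI).snd, (q.imJ).snd, (q.imK).snd⟩

/-- coefficientwise conjugate of a dual quaternion polynomial -/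
def pconj (M : Polynomial DH) : Polynomial DH := ∑ i ∈ M.support, C (star (M.coeff i)) * X ^ i

/-- coefficientwise conjugate of a quaternion polynomial -/
def qpconj (P : Polynomial HH) : Polynomial HH := ∑ i ∈ P.support, C (star (P.coeff i)) * X ^ i

/-- primal part of a dual quaternion polynomial -/
def Ppart (M : Polynomial DH) : Polynomial HH := ∑ i ∈ M.support, C (primal (M.coeff i)) * X ^ i

/-- dual part of a dual quaternion polynomial -/
def Dpart (M : Polynomial DH) : Polynomial HH := ∑ i ∈ M.support, C (dualPart (M.coeff i)) * X ^ i

/-- primal part of a dual number polynomial -/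
def dpr (p : Polynomial DD) : Polynomial ℝ := ∑ i ∈ p.support, C ((p.coeff i).fst) * X ^ i

/-- the dual number polynomial f + εg built from two real polynomials -/
def dpoly (f g : Polynomial ℝ) : Polynomial DD :=
  f.map (algebraMap ℝ DD) + (DualNumber.eps : DD) • g.map (algebraMap ℝ DD)

/-- embedding of quaternion polynomials into dual quaternion polynomials -/
def toDQp (P : Polynomial HH) : Polynomial DH := ∑ i ∈ P.support, C (ofQ (P.coeff i)) * X ^ i

/-- the quaternion unit i -/
def qi : HH := ⟨0, 1, 0, 0⟩
/-- the quaternion unit j -/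
def qj : HH := ⟨0, 0, 1, 0⟩
/-- the quaternion unit k -/
def qk : HH := ⟨0, 0, 0, 1⟩

namespace Quaternion

variable {R : Type*}

section CommRing

variable [CommRing R]

theorem re_mul_star_sub_mul_star (p d : ℍ[R]) : (p * star d - d * star p).re = 0 := by
  have h : star (p * star d) = d * star p := by rw [star_mul, star_star]
  rw [← h, re_sub, re_star, sub_self]

theorem mul_star_sub_mul_star_smul_add (p d₁ d₂ : ℍ[R]) (c : R) :
    p * star (c • d₁ + d₂) - (c • d₁ + d₂) * star p =
      c • (p * star d₁ - d₁ * star p) + (p * star d₂ - d₂ * star p) := by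
  rw [star_add, star_smul, mul_add, add_mul, mul_smul_comm, smul_mul_assoc]
  module

theorem mul_star_sub_mul_star_smul_self (p : ℍ[R]) (c : R) :
    p * star (c • p) - c • p * star p = 0 := by
  rw [star_smul, mul_smul_comm, smul_mul_assoc, sub_self]

theorem mul_star_mul_sub_mul_mul_star {v : ℍ[R]} (hv : v.re = 0) (p : ℍ[R]) :
    p * star (v * p) - v * p * star p = (-(2 * normSq p)) • v := by
  have hsv : star v = -v := by ext <;> simp [hv]
  rw [star_mul, hsv, mul_neg, mul_assoc, self_mul_star, mul_neg, ← mul_assoc, self_mul_star,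
    coe_mul_eq_smul, mul_coe_eq_smul]
  module

end CommRing

section Field

variable [Field R] [CharZero R] {p : ℍ[R]}

theorem exists_mul_star_sub_mul_star_eq (hp : normSq p ≠ 0) {v : ℍ[R]} (hv : v.re = 0) :
    ∃ d, p * star d - d * star p = v := by
  refine ⟨(-(2 * normSq p))⁻¹ • (v * p), ?_⟩
  rw [star_smul, mul_smul_comm, smul_mul_assoc, ← smul_sub, mul_star_mul_sub_mul_mul_star hv,
    smul_smul, inv_mul_cancel₀ (by simpa using hp), one_smul]

/-- `p * star d` is self-conjugate, hence a scalar `r`, and then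
`|p|² • d = d * star p * p = r • p`. -/
theorem exists_eq_smul_of_mul_star_eq (hp : normSq p ≠ 0) {d : ℍ[R]}
    (h : p * star d = d * star p) : ∃ c : R, d = c • p := by
  set r : R := (p * star d).re
  have hreal : d * star p = (r : ℍ[R]) := by
    rw [← h, ← star_eq_self, star_mul, star_star, h]
  refine ⟨r / normSq p, ?_⟩
  have hnorm : normSq p • d = r • p := by
    rw [← mul_coe_eq_smul, ← star_mul_self, ← mul_assoc, hreal, coe_mul_eq_smul]
  rw [div_eq_inv_mul, ← smul_smul, ← hnorm, smul_smul, inv_mul_cancel₀ hp, one_smul]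

theorem mul_star_sub_mul_star_eq_zero_iff (hp : normSq p ≠ 0) (d : ℍ[R]) :
    p * star d - d * star p = 0 ↔ ∃ c : R, d = c • p := by
  refine ⟨fun h ↦ exists_eq_smul_of_mul_star_eq hp (sub_eq_zero.mp h), ?_⟩
  rintro ⟨c, rfl⟩
  exact mul_star_sub_mul_star_smul_self p c

end Field

end Quaternion

/-- For fixed nonzero p, the ℝ-linear map d ↦ p·conj(d) − d·conj(p) maps ℍ onto the pure
quaternions and its kernel is the line spanned by p. -/
theorem stmt5 (p : HH) (hp : p ≠ 0) (φ : HH → HH) (hφ : ∀ d, φ d = p * star d - d * star p) :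
    (∀ d, (φ d).re = 0) ∧
    (∀ (c : ℝ) (d₁ d₂ : HH), φ (c • d₁ + d₂) = c • φ d₁ + φ d₂) ∧
    (∀ v : HH, v.re = 0 → ∃ d, φ d = v) ∧
    (∀ d, φ d = 0 ↔ ∃ c : ℝ, d = c • p) := by
  have hn : normSq p ≠ 0 := normSq_eq_zero.not.mpr hp
  simp only [hφ]
  exact ⟨re_mul_star_sub_mul_star p, fun c d₁ d₂ ↦ mul_star_sub_mul_star_smul_add p d₁ d₂ c,
    fun _ hv ↦ exists_mul_star_sub_mul_star_eq hn hv, mul_star_sub_mul_star_eq_zero_iff hn⟩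
end
end

section
/- Given a dual quaternion q = p + εd with p ≠ 0, the product (N(p) − (ε/2)(p·conj(d) + d·conj(p)))·(p + εd) equals N(p)·p + (ε/2)(d·conj(p) − p·conj(d))·p, and this dual quaternion satisfies Study's condition. -/
open Polynomial TrivSqZeroExt Quaternion

noncomputable section

/-!
Because `ε` is central with `ε² = 0`, `(a - ε b)(c + ε e) = a c + ε (a e - b c)`, so the product
reduces to the quaternion identity `N(p) d - ½ (p d̄ + d p̄) p = ½ (d p̄ - p d̄) p`, which holds since
`p̄ p = N(p)` is a central scalar. The new dual part is `v p` with `v = ½ (d p̄ - p d̄)` pure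
imaginary, and for a primal part `r p` with `r` real, `P D̄ + D P̄ = r N(p) (v̄ + v) = 0`.
-/

lemma ofQ_sub (a b : HH) : ofQ (a - b) = ofQ a - ofQ b := by
  ext <;> simp only [Quaternion.re_sub, Quaternion.imI_sub, Quaternion.imJ_sub,
    Quaternion.imK_sub] <;> simp [ofQ, inl_sub]

lemma ofQ_mul (a b : HH) : ofQ (a * b) = ofQ a * ofQ b := by
  ext <;> simp only [Quaternion.re_mul, Quaternion.imI_mul, Quaternion.imJ_mul,
    Quaternion.imK_mul] <;> simp [ofQ, fst_mul, snd_mul]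

lemma εq_mul_εq : εq * εq = 0 := by
  rw [εq, ← Quaternion.coe_mul, DualNumber.eps_mul_eps, Quaternion.coe_zero]

lemma commute_εq (a : DH) : Commute εq a := Quaternion.coe_commutes _ a

lemma sub_mul_add_of_mul_self_eq_zero {R : Type*} [Ring R] {ε : R} (a b c e : R)
    (hε : ε * ε = 0) (ha : Commute ε a) (hb : Commute ε b) :
    (a - ε * b) * (c + ε * e) = a * c + ε * (a * e - b * c) := by
  have hεbεe : ε * b * (ε * e) = 0 := by
    rw [hb.eq, mul_assoc, ← mul_assoc ε, hε, zero_mul, mul_zero]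
  rw [sub_mul, mul_add, mul_add, ← mul_assoc a, ← ha.eq, mul_assoc, hεbεe, mul_sub,
    mul_assoc ε b c]
  abel

section Quaternion

variable {R : Type*} [CommRing R]

lemma star_mul_star_sub_eq_neg (p d : ℍ[R]) :
    star (d * star p - p * star d) = -(d * star p - p * star d) := by
  simp only [star_sub, star_mul, star_star, neg_sub]

lemma smul_mul_star_add_eq_zero_of_star_eq_neg (r : R) (p v : ℍ[R]) (hv : star v = -v) :
    (r • p) * star (v * p) + (v * p) * star (r • p) = 0 := by
  rw [star_mul, hv, Quaternion.star_smul, smul_mul_assoc, mul_smul_comm, ← mul_assoc p,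
    mul_assoc v, Quaternion.self_mul_star, Quaternion.coe_commutes, neg_mul, ← smul_add,
    neg_add_cancel, smul_zero]

end Quaternion

lemma normSq_mul_sub_half_mul {K : Type*} [Field K] [NeZero (2 : K)] (p d : ℍ[K]) :
    ((normSq p : K) : ℍ[K]) * d - ((2 : K)⁻¹ • (p * star d + d * star p)) * p =
      (2 : K)⁻¹ • ((d * star p - p * star d) * p) := by
  have halves : ((normSq p : K) : ℍ[K]) * d =
      (2 : K)⁻¹ • (d * (normSq p : K)) + (2 : K)⁻¹ • (d * (normSq p : K)) := by
    rw [← add_smul, ← two_mul (2⁻¹ : K), mul_inv_cancel₀ two_ne_zero, one_smul,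
      Quaternion.coe_commutes]
  rw [smul_mul_assoc, add_mul, mul_assoc d, Quaternion.star_mul_self, sub_mul, mul_assoc d,
    Quaternion.star_mul_self, halves, smul_add, smul_sub]
  abel

theorem stmt6_general (p d : HH) :
    (ofQ ((normSq p : ℝ) : HH) - εq * ofQ ((2 : ℝ)⁻¹ • (p * star d + d * star p))) *
        (ofQ p + εq * ofQ d) =
      ofQ (normSq p • p) + εq * ofQ ((2 : ℝ)⁻¹ • ((d * star p - p * star d) * p)) ∧
    (normSq p • p) * star ((2 : ℝ)⁻¹ • ((d * star p - p * star d) * p)) +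
      ((2 : ℝ)⁻¹ • ((d * star p - p * star d) * p)) * star (normSq p • p) = 0 := by
  constructor
  · rw [sub_mul_add_of_mul_self_eq_zero _ _ _ _ εq_mul_εq (commute_εq _) (commute_εq _),
      ← ofQ_mul, ← ofQ_mul, ← ofQ_mul, ← ofQ_sub, normSq_mul_sub_half_mul (K := ℝ),
      Quaternion.coe_mul_eq_smul]
  · rw [← smul_mul_assoc]
    refine smul_mul_star_add_eq_zero_of_star_eq_neg _ _ _ ?_
    rw [Quaternion.star_smul, star_mul_star_sub_eq_neg, smul_neg]

/-- (N(p) − (ε/2)(p conj d + d conj p))(p + εd) = N(p)p + (ε/2)(d conj p − p conj d)p,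
and the result satisfies Study's condition. -/
theorem stmt6 (p d : HH) (hp : p ≠ 0) :
    (ofQ ((normSq p : ℝ) : HH) - εq * ofQ ((2 : ℝ)⁻¹ • (p * star d + d * star p))) *
        (ofQ p + εq * ofQ d) =
      ofQ (normSq p • p) + εq * ofQ ((2 : ℝ)⁻¹ • ((d * star p - p * star d) * p)) ∧
    (normSq p • p) * star ((2 : ℝ)⁻¹ • ((d * star p - p * star d) * p)) +
      ((2 : ℝ)⁻¹ • ((d * star p - p * star d) * p)) * star (normSq p • p) = 0 :=
  stmt6_general p d
end
end

section
/- Let p = f + εg ∈ 𝔻[t] be a monic polynomial over the dual numbers, with f = ∏ᵢ Nᵢ^{nᵢ} where N₁,…,N_m ∈ ℝ[t] are pairwise coprime irreducible monic polynomials. Then p factors into a product of monic polynomials in 𝔻[t] each having irreducible primal part if and only if ∏ᵢ Nᵢ^{nᵢ−1} divides g. -/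
open Polynomial TrivSqZeroExt Quaternion

noncomputable section

/-!
Writing each factor as `aⱼ + ε bⱼ`, a product of such factors is `∏ aⱼ + ε ∑ⱼ bⱼ ∏_{l ≠ j} aₗ`.
If the `aⱼ` are monic irreducible, each of them is one of the `Nᵢ`, so every cofactor
`∏_{l ≠ j} aₗ = f / Nᵢ` is a multiple of `∏ Nᵢ^{nᵢ-1}`, and hence so is `g`.
Conversely, if `g = (∏ Nᵢ^{nᵢ-1}) h`, monicity of `p` forces `deg h < deg ∏ Nᵢ`, and the partial
fraction decomposition `h = ∑ rᵢ ∏_{k ≠ i} N_k` with `deg rᵢ < deg Nᵢ` gives the factorization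
`p = ∏ᵢ (Nᵢ + ε rᵢ) Nᵢ^{nᵢ-1}` into monic factors.
-/

open Finset

theorem Finset.prod_pow_eq_prod_pow_sub_one_mul_prod {ι M : Type*} [CommMonoid M] {s : Finset ι}
    (N : ι → M) {n : ι → ℕ} (hn : ∀ i ∈ s, 0 < n i) :
    ∏ i ∈ s, N i ^ n i = (∏ i ∈ s, N i ^ (n i - 1)) * ∏ i ∈ s, N i := by
  rw [← prod_mul_distrib]
  exact prod_congr rfl fun i hi => (pow_sub_one_mul (hn i hi).ne' (N i)).symm

theorem Submonoid.exists_fin_prod_of_mem_closure {M : Type*} [CommMonoid M] {S : Set M} {x : M}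
    (hx : x ∈ Submonoid.closure S) : ∃ (k : ℕ) (F : Fin k → M), x = ∏ j, F j ∧ ∀ j, F j ∈ S := by
  obtain ⟨l, hlS, rfl⟩ := Submonoid.exists_list_of_mem_closure hx
  exact ⟨l.length, fun j => l[j.1], (Fin.prod_univ_getElem l).symm,
    fun j => hlS _ (List.getElem_mem _)⟩

theorem Polynomial.degree_sum_mul_prod_erase_lt {R ι : Type*} [CommRing R] [Nontrivial R]
    [DecidableEq ι] {s : Finset ι} {N r : ι → R[X]} (hN : ∀ i ∈ s, (N i).Monic)
    (hr : ∀ i ∈ s, (r i).degree < (N i).degree) :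
    (∑ i ∈ s, r i * ∏ k ∈ s.erase i, N k).degree < (∏ i ∈ s, N i).degree := by
  have hprod_ne_bot : ⊥ < (∏ i ∈ s, N i).degree :=
    bot_lt_iff_ne_bot.mpr (degree_ne_bot.mpr (monic_prod_of_monic s N hN).ne_zero)
  refine (degree_sum_le _ _).trans_lt ((Finset.sup_lt_iff hprod_ne_bot).mpr fun i hi => ?_)
  have herase : (∏ k ∈ s.erase i, N k).Monic :=
    monic_prod_of_monic _ N fun k hk => hN k (mem_of_mem_erase hk)
  rw [← mul_prod_erase s N hi, herase.degree_mul, herase.degree_mul]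
  exact (WithBot.add_lt_add_iff_right (degree_ne_bot.mpr herase.ne_zero)).mpr (hr i hi)

theorem Polynomial.exists_eq_sum_rem_mul_prod_erase {R ι : Type*} [CommRing R] [Nontrivial R]
    [DecidableEq ι] {s : Finset ι} {N : ι → R[X]} (hN : ∀ i ∈ s, (N i).Monic)
    (hcop : Set.Pairwise s fun i j => IsCoprime (N i) (N j)) {h : R[X]}
    (hh : h.degree < (∏ i ∈ s, N i).degree) :
    ∃ r : ι → R[X], (∀ i ∈ s, (r i).degree < (N i).degree) ∧
      h = ∑ i ∈ s, r i * ∏ k ∈ s.erase i, N k := by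
  obtain ⟨q, r, hr, hqr⟩ := eq_quo_mul_prod_add_sum_rem_mul_prod h hN hcop
  refine ⟨r, hr, sub_eq_zero.mp ?_⟩
  have hlt : (h - ∑ i ∈ s, r i * ∏ k ∈ s.erase i, N k).degree < (∏ i ∈ s, N i).degree :=
    (degree_sub_le _ _).trans_lt (max_lt hh (degree_sum_mul_prod_erase_lt hN hr))
  by_contra hne
  refine (monic_prod_of_monic s N hN).not_dvd_of_degree_lt hne hlt ⟨q, ?_⟩
  rw [hqr, add_sub_cancel_right, mul_comm]

theorem Polynomial.prod_pow_sub_one_dvd_prod_erase {K ι κ : Type*} [Field K] [Fintype ι]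
    [Fintype κ] [DecidableEq κ] {N : ι → K[X]} {n : ι → ℕ} (hN : ∀ i, (N i).Monic)
    (hNirr : ∀ i, Irreducible (N i)) (hn : ∀ i, 0 < n i) {a : κ → K[X]}
    (ha : ∀ j, (a j).Monic) (hairr : ∀ j, Irreducible (a j))
    (hprod : ∏ j, a j = ∏ i, N i ^ n i) (j : κ) :
    ∏ i, N i ^ (n i - 1) ∣ ∏ l ∈ univ.erase j, a l := by
  obtain ⟨i, hi⟩ : ∃ i, a j = N i := by
    have hdvd : a j ∣ ∏ i, N i ^ n i := hprod ▸ dvd_prod_of_mem a (mem_univ j)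
    obtain ⟨i, -, hdvd_pow⟩ := (hairr j).prime.exists_mem_finset_dvd hdvd
    exact ⟨i, eq_of_monic_of_associated (ha j) (hN i)
      ((hairr j).associated_of_dvd (hNirr i) ((hairr j).prime.dvd_of_dvd_pow hdvd_pow))⟩
  have hdvd : (∏ i, N i ^ (n i - 1)) * a j ∣ a j * ∏ l ∈ univ.erase j, a l := by
    rw [mul_prod_erase _ _ (mem_univ j), hprod,
      prod_pow_eq_prod_pow_sub_one_mul_prod N fun i _ => hn i, hi]
    exact mul_dvd_mul_left _ (dvd_prod_of_mem N (mem_univ i))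
  rwa [mul_comm, mul_dvd_mul_iff_left (hairr j).ne_zero] at hdvd

theorem fst_coeff_dpoly (f g : ℝ[X]) (k : ℕ) : ((dpoly f g).coeff k).fst = f.coeff k := by
  simp [dpoly, coeff_smul, algebraMap_eq_inl']

theorem snd_coeff_dpoly (f g : ℝ[X]) (k : ℕ) : ((dpoly f g).coeff k).snd = g.coeff k := by
  simp [dpoly, coeff_smul, algebraMap_eq_inl']

theorem dpoly_injective {f g f' g' : ℝ[X]} (h : dpoly f g = dpoly f' g') : f = f' ∧ g = g' := by
  constructor <;> ext k
  · simpa only [fst_coeff_dpoly] using congrArg (fun p => (p.coeff k).fst) h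
  · simpa only [snd_coeff_dpoly] using congrArg (fun p => (p.coeff k).snd) h

theorem exists_dpoly_eq (p : DD[X]) : ∃ f g, dpoly f g = p := by
  refine ⟨∑ k ∈ p.support, monomial k (p.coeff k).fst,
    ∑ k ∈ p.support, monomial k (p.coeff k).snd, ?_⟩
  ext k : 1
  ext <;> by_cases hk : k ∈ p.support <;>
    simp [fst_coeff_dpoly, snd_coeff_dpoly, coeff_monomial, hk, notMem_support_iff.mp]

theorem dpr_eq_map (p : DD[X]) : dpr p = p.map (fstHom ℝ ℝ ℝ).toRingHom := by
  conv_rhs => rw [p.as_sum_support_C_mul_X_pow]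
  simp [dpr, Polynomial.map_sum]

theorem dpr_dpoly (f g : ℝ[X]) : dpr (dpoly f g) = f := by
  ext k
  rw [dpr_eq_map, coeff_map]
  exact fst_coeff_dpoly f g k

theorem Polynomial.Monic.dpr {p : DD[X]} (hp : p.Monic) : (dpr p).Monic := by
  rw [dpr_eq_map]
  exact hp.map _

theorem dpoly_one : dpoly 1 0 = 1 := by
  simp [dpoly]

theorem dpoly_mul (a b c d : ℝ[X]) :
    dpoly a b * dpoly c d = dpoly (a * c) (a * d + b * c) := by
  have hε : C (DualNumber.eps : DD) * C DualNumber.eps = 0 := by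
    rw [← C_mul, DualNumber.eps_mul_eps, C_0]
  simp only [dpoly, Polynomial.map_mul, Polynomial.map_add, smul_eq_C_mul]
  linear_combination (b.map (algebraMap ℝ DD) * d.map (algebraMap ℝ DD)) * hε

theorem dpoly_zero_pow (a : ℝ[X]) (t : ℕ) : dpoly a 0 ^ t = dpoly (a ^ t) 0 := by
  simp [dpoly, Polynomial.map_pow]

theorem dpoly_prod {ι : Type*} [DecidableEq ι] (s : Finset ι) (a b : ι → ℝ[X]) :
    ∏ j ∈ s, dpoly (a j) (b j) =
      dpoly (∏ j ∈ s, a j) (∑ j ∈ s, b j * ∏ l ∈ s.erase j, a l) := by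
  induction s using Finset.induction_on with
  | empty => simp [dpoly_one]
  | insert x t hx ih =>
    rw [prod_insert hx, ih, dpoly_mul, prod_insert hx, sum_insert hx, erase_insert hx, mul_sum]
    congr 1
    rw [add_comm]
    congr 1
    refine sum_congr rfl fun j hj => ?_
    rw [erase_insert_of_ne (ne_of_mem_of_not_mem hj hx).symm,
      prod_insert fun h => hx (mem_of_mem_erase h)]
    ring

theorem dpoly_monic_iff {f g : ℝ[X]} : (dpoly f g).Monic ↔ f.Monic ∧ g.degree < f.degree := by
  constructor
  · intro hp
    have hf : f.Monic := dpr_dpoly f g ▸ hp.dpr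
    have hdeg : (dpoly f g).natDegree = f.natDegree := by
      rw [← hp.natDegree_map (fstHom ℝ ℝ ℝ).toRingHom, ← dpr_eq_map, dpr_dpoly]
    refine ⟨hf, ?_⟩
    rw [degree_eq_natDegree hf.ne_zero, degree_lt_iff_coeff_zero]
    intro k hk
    rw [← hdeg] at hk
    rw [← snd_coeff_dpoly f g k]
    rcases hk.eq_or_lt with rfl | hlt
    · rw [hp.coeff_natDegree, snd_one]
    · rw [coeff_eq_zero_of_natDegree_lt hlt, snd_zero]
  · rintro ⟨hf, hg⟩
    refine (hf.map _).add_of_left ((degree_smul_le _ _).trans_lt ?_)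
    rw [degree_map_eq_of_injective (algebraMap ℝ DD).injective,
      degree_map_eq_of_injective (algebraMap ℝ DD).injective]
    exact hg

section Factorization

variable {m : ℕ} {N : Fin m → ℝ[X]} {n : Fin m → ℕ} {f g : ℝ[X]}

theorem prod_pow_sub_one_dvd_of_dpoly_eq_prod (hmon : ∀ i, (N i).Monic)
    (hirr : ∀ i, Irreducible (N i)) (hn : ∀ i, 0 < n i) (hf : f = ∏ i, N i ^ n i)
    {κ : Type*} [Fintype κ] [DecidableEq κ] {F : κ → DD[X]} (hF : dpoly f g = ∏ j, F j)
    (hFirr : ∀ j, (F j).Monic ∧ Irreducible (dpr (F j))) :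
    ∏ i, N i ^ (n i - 1) ∣ g := by
  choose a b hab using fun j => exists_dpoly_eq (F j)
  have hdpr : ∀ j, dpr (F j) = a j := fun j => by rw [← hab j, dpr_dpoly]
  rw [← funext hab, dpoly_prod] at hF
  obtain ⟨hfa, rfl⟩ := dpoly_injective hF
  refine dvd_sum fun j _ => (prod_pow_sub_one_dvd_prod_erase hmon hirr hn
    (fun j => hdpr j ▸ (hFirr j).1.dpr) (fun j => hdpr j ▸ (hFirr j).2) ?_ j).mul_left _
  rw [← hfa, hf]

theorem dpoly_mem_closure_of_prod_pow_sub_one_dvd (hmon : ∀ i, (N i).Monic)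
    (hirr : ∀ i, Irreducible (N i)) (hcop : ∀ i j, i ≠ j → IsCoprime (N i) (N j))
    (hn : ∀ i, 0 < n i) (hf : f = ∏ i, N i ^ n i) (hmonic : (dpoly f g).Monic)
    (hdvd : ∏ i, N i ^ (n i - 1) ∣ g) :
    dpoly f g ∈ Submonoid.closure {F | F.Monic ∧ Irreducible (dpr F)} := by
  obtain ⟨h, rfl⟩ := hdvd
  have hsplit := prod_pow_eq_prod_pow_sub_one_mul_prod N fun i (_ : i ∈ univ) => hn i
  have hdeg : h.degree < (∏ i, N i).degree := by
    have hlt := (dpoly_monic_iff.mp hmonic).2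
    rw [hf, hsplit, degree_mul, degree_mul] at hlt
    exact (WithBot.add_lt_add_iff_left (degree_ne_bot.mpr
      (monic_prod_of_monic _ _ fun i _ => (hmon i).pow _).ne_zero)).mp hlt
  obtain ⟨r, hr, rfl⟩ := exists_eq_sum_rem_mul_prod_erase (fun i _ => hmon i)
    (fun i _ j _ hij => hcop i j hij) hdeg
  have hfactor : dpoly f ((∏ i, N i ^ (n i - 1)) * ∑ i, r i * ∏ k ∈ univ.erase i, N k) =
      ∏ i, dpoly (N i) (r i) * dpoly (N i) 0 ^ (n i - 1) := by
    simp only [dpoly_zero_pow, dpoly_mul, mul_zero, zero_add, ← pow_succ',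
      Nat.sub_add_cancel (hn _)]
    rw [dpoly_prod, hf, mul_sum]
    congr 1
    refine sum_congr rfl fun i _ => ?_
    rw [← mul_prod_erase univ (fun i => N i ^ (n i - 1)) (mem_univ i),
      prod_pow_eq_prod_pow_sub_one_mul_prod N fun k _ => hn k]
    ring
  rw [hfactor]
  refine prod_mem fun i _ => mul_mem (Submonoid.subset_closure ?_)
    (pow_mem (Submonoid.subset_closure ?_) _)
  · exact ⟨dpoly_monic_iff.mpr ⟨hmon i, hr i (mem_univ i)⟩, (dpr_dpoly _ _).symm ▸ hirr i⟩
  · have hdeg_pos : (0 : ℝ[X]).degree < (N i).degree := by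
      simpa [bot_lt_iff_ne_bot] using (hmon i).ne_zero
    exact ⟨dpoly_monic_iff.mpr ⟨hmon i, hdeg_pos⟩, (dpr_dpoly _ _).symm ▸ hirr i⟩

end Factorization

/-- A monic p = f + εg ∈ 𝔻[t] with f = ∏ Nᵢ^{nᵢ} (Nᵢ coprime irreducible monic) factors into
monic polynomials with irreducible primal part iff ∏ Nᵢ^{nᵢ−1} divides g. -/
theorem stmt10 (m : ℕ) (N : Fin m → Polynomial ℝ) (n : Fin m → ℕ)
    (hmon : ∀ i, (N i).Monic) (hirr : ∀ i, Irreducible (N i))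
    (hcop : ∀ i j, i ≠ j → IsCoprime (N i) (N j)) (hn : ∀ i, 0 < n i)
    (f g : Polynomial ℝ) (hf : f = ∏ i, N i ^ n i) (hmonic : (dpoly f g).Monic) :
    (∃ (k : ℕ) (F : Fin k → Polynomial DD),
        dpoly f g = ∏ j, F j ∧ ∀ j, (F j).Monic ∧ Irreducible (dpr (F j))) ↔
      (∏ i, N i ^ (n i - 1)) ∣ g := by
  constructor
  · rintro ⟨k, F, hF, hFirr⟩
    exact prod_pow_sub_one_dvd_of_dpoly_eq_prod hmon hirr hn hf hF hFirr
  · intro hdvd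
    exact Submonoid.exists_fin_prod_of_mem_closure (M := DD[X])
      (dpoly_mem_closure_of_prod_pow_sub_one_dvd hmon hirr hcop hn hf hmonic hdvd)
end
end

section
/- If M = ∏_{j=1}^{k} F_j is a product of linear dual quaternion polynomials F_j = P_j + εD_j (with P_j linear quaternion polynomials) and N(P) = ∏ᵢ Nᵢ^{nᵢ} with Nᵢ coprime irreducible quadratics, then ∏ᵢ Nᵢ^{nᵢ−1} divides the norm polynomial N(M). -/
open Polynomial TrivSqZeroExt Quaternion

noncomputable section

/-!
Norms of dual quaternion polynomials are central, so `N(M) = ∏ N(F_j)`, and the norm of a linear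
factor is `N(F_j) = p_j + ε r_j` with real polynomials `p_j` of degree at most two. Since `ε² = 0`,
`N(M) = ∏ p_j + ε ∑_j r_j ∏_{l ≠ j} p_l`, and the primal part `∏ p_j` is `N(P) = ∏ Nᵢ^{nᵢ}`.
For degree reasons no `Nᵢ²` divides a `p_j`, so each cofactor `∏_{l ≠ j} p_l` is still divisible
by `∏ Nᵢ^{nᵢ-1}`, and hence so is every term of `N(M)`.
-/

namespace Polynomial

variable {A : Type*} [Semiring A]

theorem coeff_sum_support_C_mul_X_pow {B : Type*} [Semiring B] (p : A[X]) {f : A → B}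
    (hf : f 0 = 0) (n : ℕ) :
    (∑ i ∈ p.support, C (f (p.coeff i)) * X ^ i).coeff n = f (p.coeff n) := by
  simp only [finsetSum_coeff, coeff_C_mul_X_pow, Finset.sum_ite_eq]
  split_ifs with h
  · rfl
  · rw [notMem_support_iff.1 h, hf]

section Conj

variable [StarRing A]

def conj (p : A[X]) : A[X] := ∑ i ∈ p.support, C (star (p.coeff i)) * X ^ i

@[simp]
theorem coeff_conj (p : A[X]) (n : ℕ) : (conj p).coeff n = star (p.coeff n) :=
  coeff_sum_support_C_mul_X_pow p (star_zero A) n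

@[simp]
theorem conj_one : conj (1 : A[X]) = 1 := by
  ext n
  simp [coeff_one, apply_ite star]

theorem conj_mul (p q : A[X]) : conj (p * q) = conj q * conj p := by
  ext n
  simp only [coeff_conj, coeff_mul, star_sum, star_mul]
  rw [← Finset.Nat.sum_antidiagonal_swap]
  rfl

theorem degree_conj_le (p : A[X]) : (conj p).degree ≤ p.degree :=
  (degree_le_iff_coeff_zero _ _).2 fun n hn => by
    rw [coeff_conj, coeff_eq_zero_of_degree_lt hn, star_zero]

theorem degree_mul_conj_le (p : A[X]) : (p * conj p).degree ≤ p.degree + p.degree :=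
  (degree_mul_le _ _).trans (add_le_add le_rfl (degree_conj_le p))

@[simp]
theorem conj_conj (p : A[X]) : conj (conj p) = p := by
  ext n
  simp

theorem star_coeff_mul_conj (p : A[X]) (n : ℕ) :
    star ((p * conj p).coeff n) = (p * conj p).coeff n := by
  rw [← coeff_conj, conj_mul, conj_conj]

theorem map_conj {B : Type*} [Semiring B] [StarRing B] (f : A →+* B)
    (hf : ∀ a, f (star a) = star (f a)) (p : A[X]) : (conj p).map f = conj (p.map f) := by
  ext n
  simp [hf]

end Conj

section Scalar

variable {R : Type*} [CommSemiring R] [Algebra R A]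

theorem commute_map_algebraMap (c : R[X]) (p : A[X]) : Commute (c.map (algebraMap R A)) p := by
  ext n
  simp only [coeff_mul, coeff_map]
  rw [← Finset.Nat.sum_antidiagonal_swap]
  exact Finset.sum_congr rfl fun x _ => Algebra.commutes _ _

theorem list_prod_mul_conj [StarRing A] (L : List A[X]) (c : A[X] → R[X])
    (hc : ∀ p ∈ L, p * conj p = (c p).map (algebraMap R A)) :
    L.prod * conj L.prod = (L.map c).prod.map (algebraMap R A) := by
  induction L with
  | nil => simp
  | cons p L ih =>
    rw [List.prod_cons]
    set s := (L.map c).prod.map (algebraMap R A)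
    calc p * L.prod * conj (p * L.prod) = p * (L.prod * conj L.prod) * conj p := by
          simp only [conj_mul, mul_assoc]
      _ = p * conj p * s := by
          rw [ih fun q hq => hc q (List.mem_cons_of_mem p hq), mul_assoc,
            (commute_map_algebraMap _ _).eq, mul_assoc]
      _ = _ := by rw [hc p List.mem_cons_self, List.map_cons, List.prod_cons, Polynomial.map_mul]

end Scalar

end Polynomial

namespace Quaternion

variable {R S : Type*} [CommRing R] [CommRing S]

def mapRingHom (f : R →+* S) : ℍ[R] →+* ℍ[S] where
  toFun q := ⟨f q.re, f q.imI, f q.imJ, f q.imK⟩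
  map_one' := by ext <;> simp
  map_mul' q r := by
    change (⟨_, _, _, _⟩ : ℍ[S]) = ⟨_, _, _, _⟩ * ⟨_, _, _, _⟩
    ext <;> simp <;> ring
  map_zero' := by ext <;> simp
  map_add' q r := by
    change (⟨_, _, _, _⟩ : ℍ[S]) = ⟨_, _, _, _⟩ + ⟨_, _, _, _⟩
    ext <;> simp

variable (f : R →+* S) (q : ℍ[R])

@[simp] theorem re_mapRingHom : (mapRingHom f q).re = f q.re := rfl
@[simp] theorem imI_mapRingHom : (mapRingHom f q).imI = f q.imI := rfl
@[simp] theorem imJ_mapRingHom : (mapRingHom f q).imJ = f q.imJ := rfl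
@[simp] theorem imK_mapRingHom : (mapRingHom f q).imK = f q.imK := rfl

theorem mapRingHom_star : mapRingHom f (star q) = star (mapRingHom f q) := by
  ext <;> simp

theorem mapRingHom_comp_algebraMap :
    (mapRingHom f).comp (algebraMap R ℍ[R]) = (algebraMap S ℍ[S]).comp f := by
  ext r <;> simp [algebraMap_def]

theorem eq_re_of_star_eq_self [IsAddTorsionFree R] {a : ℍ[R]} (h : star a = a) : a = a.re := by
  have h_eq_zero {x : R} (hx : -x = x) : x = 0 :=
    nsmul_right_injective two_ne_zero <| show 2 • x = 2 • 0 by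
      rw [two_nsmul, smul_zero, neg_eq_iff_add_eq_zero.mp hx]
  ext
  · simp
  · exact h_eq_zero (congrArg QuaternionAlgebra.imI h)
  · exact h_eq_zero (congrArg QuaternionAlgebra.imJ h)
  · exact h_eq_zero (congrArg QuaternionAlgebra.imK h)

end Quaternion

instance {R M : Type*} [AddMonoid R] [AddMonoid M] [IsAddTorsionFree R] [IsAddTorsionFree M] :
    IsAddTorsionFree (TrivSqZeroExt R M) :=
  inferInstanceAs (IsAddTorsionFree (R × M))

namespace Polynomial

variable {R : Type*} [CommRing R]

theorem mul_conj_mem_lifts [IsAddTorsionFree R] (p : ℍ[R][X]) :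
    p * conj p ∈ lifts (algebraMap R ℍ[R]) := by
  rw [lifts_iff_coeff_lifts]
  intro n
  rw [Quaternion.algebraMap_def]
  exact ⟨_, (Quaternion.eq_re_of_star_eq_self (star_coeff_mul_conj p n)).symm⟩

theorem degree_le_of_mul_conj_eq_map {p : ℍ[R][X]} {c : R[X]}
    (h : p * conj p = c.map (algebraMap R ℍ[R])) : c.degree ≤ p.degree + p.degree := by
  rw [← degree_map_eq_of_injective Quaternion.algebraMap_injective, ← h]
  exact degree_mul_conj_le p

end Polynomial

namespace DualNumber

variable (K : Type*) [CommRing K]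

def fstRingHom : DualNumber K →+* K := (fstHom K K K).toRingHom

variable {K}

theorem exists_eq_map_fst_add_eps_mul (x : (DualNumber K)[X]) :
    ∃ r, x = (x.map (fstRingHom K)).map (algebraMap K (DualNumber K)) + C eps * r := by
  induction x using Polynomial.induction_on' with
  | add x y hx hy =>
    obtain ⟨r, hr⟩ := hx
    obtain ⟨s, hs⟩ := hy
    refine ⟨r + s, ?_⟩
    rw [Polynomial.map_add, Polynomial.map_add]
    linear_combination hr + hs
  | monomial n a =>
    refine ⟨monomial n (inl a.snd), ?_⟩
    ext m : 1
    rcases eq_or_ne n m with rfl | hnm <;> ext <;>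
      simp [coeff_monomial, fstRingHom, algebraMap_eq_inl, *]

theorem map_dvd_mul_prod {ι : Type*} [DecidableEq ι] (s : Finset ι)
    (q : ι → (DualNumber K)[X]) (c d : K[X])
    (h : ∀ i ∈ s, d ∣ c * ∏ j ∈ s.erase i, (q j).map (fstRingHom K))
    (hs : d ∣ c * ∏ j ∈ s, (q j).map (fstRingHom K)) :
    d.map (algebraMap K _) ∣ c.map (algebraMap K _) * ∏ j ∈ s, q j := by
  induction s using Finset.induction_on generalizing c with
  | empty => simpa using Polynomial.map_dvd (algebraMap K _) hs
  | insert a t ha ih =>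
    set ι := algebraMap K (DualNumber K)
    set p := fun j => (q j).map (fstRingHom K)
    rw [Finset.prod_insert ha] at hs ⊢
    obtain ⟨r, hr⟩ := exists_eq_map_fst_add_eps_mul (q a)
    obtain ⟨u, hu⟩ := exists_eq_map_fst_add_eps_mul (∏ j ∈ t, q j)
    rw [Polynomial.map_prod] at hu
    have heps : (C eps : (DualNumber K)[X]) * C eps = 0 := by rw [← C_mul, eps_mul_eps, C_0]
    -- `ε · ∏ q` only sees the primal parts, as `ε² = 0`.
    have hsplit : c.map ι * (q a * ∏ j ∈ t, q j) =
        (c * p a).map ι * ∏ j ∈ t, q j + C eps * r * (c * ∏ j ∈ t, p j).map ι := by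
      rw [Polynomial.map_mul, Polynomial.map_mul]
      linear_combination (c.map ι * ∏ j ∈ t, q j) * hr + (c.map ι * C eps * r) * hu +
        (c.map ι * r * u) * heps
    rw [hsplit]
    refine dvd_add (ih (c * p a) (fun i hi => ?_) (by rwa [mul_assoc]))
      (dvd_mul_of_dvd_right (Polynomial.map_dvd ι ?_) (C eps * r))
    · have hia : a ≠ i := fun hai => ha (hai ▸ hi)
      have := h i (Finset.mem_insert_of_mem hi)
      rwa [Finset.erase_insert_of_ne hia,
        Finset.prod_insert fun h' => ha (Finset.mem_of_mem_erase h'), ← mul_assoc] at this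
    · have := h a (Finset.mem_insert_self a t)
      rwa [Finset.erase_insert ha] at this

end DualNumber

theorem Prime.pow_sub_one_dvd_of_not_sq_dvd {M : Type*} [CommMonoidWithZero M]
    [IsCancelMulZero M] {p a b : M} (hp : Prime p) {n : ℕ} (h : p ^ n ∣ a * b)
    (ha : ¬p ^ 2 ∣ a) : p ^ (n - 1) ∣ b := by
  rcases n with _ | n
  · simp
  rw [Nat.add_sub_cancel]
  by_cases hpa : p ∣ a
  · obtain ⟨a, rfl⟩ := hpa
    have ha' : ¬p ∣ a := fun ⟨t, ht⟩ => ha ⟨t, by rw [ht, sq, mul_assoc]⟩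
    rw [pow_succ', mul_assoc] at h
    exact hp.pow_dvd_of_dvd_mul_left n ha' ((mul_dvd_mul_iff_left hp.ne_zero).1 h)
  · exact (pow_dvd_pow p n.le_succ).trans (hp.pow_dvd_of_dvd_mul_left _ hpa h)

theorem Finset.prod_pow_sub_one_dvd_of_mul_eq {ι R : Type*} [CommSemiring R] [IsCancelMulZero R]
    (s : Finset ι) {N : ι → R} {n : ι → ℕ} (hN : ∀ i ∈ s, Prime (N i))
    (hcop : (s : Set ι).Pairwise (Function.onFun IsCoprime N)) {a w : R}
    (h : a * w = ∏ i ∈ s, N i ^ n i) (ha : ∀ i ∈ s, ¬N i ^ 2 ∣ a) :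
    ∏ i ∈ s, N i ^ (n i - 1) ∣ w :=
  Finset.prod_dvd_of_coprime (hcop.mono' fun _ _ hij => hij.pow) fun i hi =>
    (hN i hi).pow_sub_one_dvd_of_not_sq_dvd (h ▸ dvd_prod_of_mem _ hi) (ha i hi)

theorem Polynomial.not_pow_dvd_of_degree_lt {R : Type*} [Semiring R] [NoZeroDivisors R]
    [Nontrivial R] {N a : R[X]} {k : ℕ} (ha : a ≠ 0) (h : a.degree < k • N.degree) : ¬N ^ k ∣ a :=
  fun hdvd => (degree_pow N k ▸ degree_le_of_dvd hdvd ha).not_gt h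

theorem pconj_eq_conj : pconj = conj := rfl

theorem qpconj_eq_conj : qpconj = conj := rfl

theorem Ppart_eq_map (M : Polynomial DH) :
    Ppart M = M.map (Quaternion.mapRingHom (DualNumber.fstRingHom ℝ)) := by
  ext1 n
  rw [coeff_map]
  exact coeff_sum_support_C_mul_X_pow M (f := primal)
    (map_zero (Quaternion.mapRingHom (DualNumber.fstRingHom ℝ))) n

theorem Ppart_mul_qpconj_Ppart_of_mul_conj_eq {M : Polynomial DH} {c : Polynomial DD}
    (h : M * conj M = c.map (algebraMap DD DH)) :
    Ppart M * qpconj (Ppart M) = (c.map (DualNumber.fstRingHom ℝ)).map (algebraMap ℝ HH) := by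
  rw [Ppart_eq_map, qpconj_eq_conj, ← map_conj _ (Quaternion.mapRingHom_star _),
    ← Polynomial.map_mul, h, map_map, Quaternion.mapRingHom_comp_algebraMap, ← map_map]

theorem stmt13_general (k : ℕ) (F : Fin k → Polynomial DH)
    (hdegF : ∀ j, (F j).degree = 1)
    (M : Polynomial DH) (hM : M = (List.ofFn F).prod)
    (m : ℕ) (N : Fin m → Polynomial ℝ) (n : Fin m → ℕ)
    (hirr : ∀ i, Irreducible (N i)) (hdeg : ∀ i, (N i).degree = 2)
    (hcop : ∀ i j, i ≠ j → IsCoprime (N i) (N j))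
    (hNP : Ppart M * qpconj (Ppart M) = (∏ i, N i ^ n i).map (algebraMap ℝ HH)) :
    (∏ i, N i ^ (n i - 1)).map (algebraMap ℝ DH) ∣ M * pconj M := by
  classical
  choose q hq using fun G : DH[X] => (mem_lifts _).1 (mul_conj_mem_lifts G)
  set p := fun j => (q (F j)).map (DualNumber.fstRingHom ℝ)
  have hnorm : M * conj M = (∏ j, q (F j)).map (algebraMap DD DH) := by
    rw [hM, list_prod_mul_conj _ q fun G _ => (hq G).symm, List.map_ofFn, List.prod_ofFn]
    rfl
  have hprimal : ∏ j, p j = ∏ i, N i ^ n i := by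
    refine map_injective _ Quaternion.algebraMap_injective ?_
    rw [← hNP, Ppart_mul_qpconj_Ppart_of_mul_conj_eq hnorm, Polynomial.map_prod]
  have hne : ∀ j, p j ≠ 0 := fun j => Finset.prod_ne_zero_iff.1
    (hprimal ▸ Finset.prod_ne_zero_iff.2 fun i _ => pow_ne_zero _ (hirr i).ne_zero) j
    (Finset.mem_univ j)
  have hdeg_lt (j) : (p j).degree < 2 • 2 := degree_map_le.trans_lt <|
    (degree_le_of_mul_conj_eq_map (hq (F j)).symm).trans_lt (by rw [hdegF]; decide)
  have hcofactor (j) : ∏ i, N i ^ (n i - 1) ∣ ∏ l ∈ Finset.univ.erase j, p l :=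
    Finset.univ.prod_pow_sub_one_dvd_of_mul_eq (fun i _ => (hirr i).prime)
      (fun i _ i' _ => hcop i i')
      (by rw [Finset.univ.mul_prod_erase p (Finset.mem_univ j), hprimal])
      fun i _ => not_pow_dvd_of_degree_lt (hne j) (hdeg i ▸ hdeg_lt j)
  have hdvd := DualNumber.map_dvd_mul_prod Finset.univ (fun j => q (F j)) 1 _
    (by simpa using hcofactor) (by
      rw [one_mul, hprimal]
      exact Finset.prod_dvd_prod_of_dvd _ _ fun i _ => pow_dvd_pow _ (Nat.sub_le _ _))
  rw [pconj_eq_conj, hnorm]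
  simpa [map_map, ← IsScalarTower.algebraMap_eq] using map_dvd (algebraMap DD DH) hdvd

/-- If M is a product of linear dual quaternion polynomials with linear primal parts, and
N(P) = ∏ Nᵢ^{nᵢ}, then ∏ Nᵢ^{nᵢ−1} divides N(M). -/
theorem stmt13 (k : ℕ) (F : Fin k → Polynomial DH)
    (hdegF : ∀ j, (F j).degree = 1) (hdegP : ∀ j, (Ppart (F j)).degree = 1)
    (M : Polynomial DH) (hM : M = (List.ofFn F).prod)
    (m : ℕ) (N : Fin m → Polynomial ℝ) (n : Fin m → ℕ)
    (hmon : ∀ i, (N i).Monic) (hirr : ∀ i, Irreducible (N i)) (hdeg : ∀ i, (N i).degree = 2)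
    (hcop : ∀ i j, i ≠ j → IsCoprime (N i) (N j)) (hn : ∀ i, 0 < n i)
    (hNP : Ppart M * qpconj (Ppart M) = (∏ i, N i ^ n i).map (algebraMap ℝ HH)) :
    (∏ i, N i ^ (n i - 1)).map (algebraMap ℝ DH) ∣ M * pconj M :=
  stmt13_general k F hdegF M hM m N n hirr hdeg hcop hNP
end
end

section
/- Let N ∈ ℝ[t] be monic quadratic and λ ∈ ℝ[t] linear, and m ≥ 2. Then there are infinitely many m-tuples (λ₁,…,λ_m) of real linear polynomials with λ₁+⋯+λ_m = λ, and for each such tuple Nᵐ + εN^{m−1}λ = ∏_{i=1}^m (N + ελᵢ) in 𝔻[t]. Consequently Nᵐ + εN^{m−1}λ has infinitely many factorizations into monic quadratic factors over the dual numbers. -/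
open Polynomial TrivSqZeroExt Quaternion

noncomputable section

lemma aux15_key {R ι : Type*} [CommRing R] (e F : R) (he : e * e = 0) (s : Finset ι) (G : ι → R) :
    ∏ i ∈ s, (F + e * G i) = F ^ s.card + e * ∑ i ∈ s, F ^ (s.card - 1) * G i := by
  classical
  induction s using Finset.induction_on with
  | empty => simp
  | @insert a s ha ih =>
    have hFS : F * ∑ i ∈ s, F ^ (s.card - 1) * G i = ∑ i ∈ s, F ^ s.card * G i := by
      rw [Finset.mul_sum]
      refine Finset.sum_congr rfl fun i hi => ?_
      rw [← mul_assoc, ← pow_succ']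
      congr 2
      have := Finset.card_pos.mpr ⟨i, hi⟩
      omega
    rw [Finset.prod_insert ha, ih, Finset.card_insert_of_notMem ha, Finset.sum_insert ha]
    have expand : (F + e * G a) * (F ^ s.card + e * ∑ i ∈ s, F ^ (s.card - 1) * G i)
        = F ^ (s.card + 1) + e * (F ^ s.card * G a + F * ∑ i ∈ s, F ^ (s.card - 1) * G i)
          + (e * e) * (G a * ∑ i ∈ s, F ^ (s.card - 1) * G i) := by ring
    rw [expand, he, zero_mul, add_zero, hFS]
    simp [Nat.add_sub_cancel]

lemma aux15_prod (N lam : Polynomial ℝ) (m : ℕ) (l : Fin m → Polynomial ℝ)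
    (hsum : ∑ i, l i = lam) :
    dpoly (N ^ m) (N ^ (m - 1) * lam) = ∏ i, dpoly N (l i) := by
  simp only [dpoly, smul_eq_C_mul]
  have he : (C (DualNumber.eps : DD)) * C (DualNumber.eps : DD) = 0 := by
    rw [← C_mul, DualNumber.eps_mul_eps, map_zero]
  have := aux15_key (C (DualNumber.eps : DD)) (N.map (algebraMap ℝ DD)) he Finset.univ
    (fun i => (l i).map (algebraMap ℝ DD))
  rw [this, Finset.card_univ, Fintype.card_fin, ← Finset.mul_sum, ← Polynomial.map_sum, hsum,
    Polynomial.map_pow, Polynomial.map_mul, Polynomial.map_pow]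

lemma aux15_snd (f g : Polynomial ℝ) (n : ℕ) : ((dpoly f g).coeff n).snd = g.coeff n := by
  have h1 : ∀ r : ℝ, (algebraMap ℝ DD) r = inl r := fun _ => rfl
  simp only [h1, dpoly, coeff_add, coeff_smul, coeff_map, smul_eq_mul, DualNumber.eps,
    inr_mul_inl, snd_add, snd_inl, snd_inr, zero_add]
  simp

lemma aux15_dpoly_inj (f g₁ g₂ : Polynomial ℝ) (h : dpoly f g₁ = dpoly f g₂) : g₁ = g₂ := by
  ext n
  rw [← aux15_snd f g₁ n, ← aux15_snd f g₂ n, h]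

lemma aux15_monic (N g : Polynomial ℝ) (hN : N.Monic) (hNdeg : N.degree = 2)
    (hg : g.degree ≤ 1) : (dpoly N g).Monic ∧ (dpoly N g).degree = 2 := by
  have hmap : (N.map (algebraMap ℝ DD)).Monic := hN.map _
  have hdeg : (N.map (algebraMap ℝ DD)).degree = 2 := by rw [hN.degree_map, hNdeg]
  have hlt : ((DualNumber.eps : DD) • g.map (algebraMap ℝ DD)).degree
      < (N.map (algebraMap ℝ DD)).degree := by
    refine lt_of_le_of_lt ((degree_smul_le _ _).trans (degree_map_le.trans hg)) ?_
    rw [hdeg]; decide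
  exact ⟨hmap.add_of_left hlt, by rw [dpoly, degree_add_eq_left_of_degree_lt hlt, hdeg]⟩

/-- For monic quadratic N, linear λ and m ≥ 2 there are infinitely many decompositions
λ = λ₁ + ⋯ + λ_m into linear polynomials, each giving a factorization
Nᵐ + εN^{m−1}λ = ∏ (N + ελᵢ); hence infinitely many factorizations into monic quadratics. -/
theorem stmt15 (N lam : Polynomial ℝ) (hN : N.Monic) (hNdeg : N.degree = 2)
    (hlam : lam.degree ≤ 1) (m : ℕ) (hm : 2 ≤ m) :
    {l : Fin m → Polynomial ℝ | (∀ i, (l i).degree ≤ 1) ∧ ∑ i, l i = lam}.Infinite ∧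
    (∀ l : Fin m → Polynomial ℝ, (∀ i, (l i).degree ≤ 1) → ∑ i, l i = lam →
      dpoly (N ^ m) (N ^ (m - 1) * lam) = ∏ i, dpoly N (l i)) ∧
    {q : Fin m → Polynomial DD | (∀ i, (q i).Monic ∧ (q i).degree = 2) ∧
      ∏ i, q i = dpoly (N ^ m) (N ^ (m - 1) * lam)}.Infinite := by
  classical
  set i0 : Fin m := ⟨0, by omega⟩ with hi0
  set i1 : Fin m := ⟨1, by omega⟩ with hi1
  have hne : i1 ≠ i0 := by simp [hi0, hi1, Fin.ext_iff]
  set lfun : ℝ → Fin m → Polynomial ℝ :=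
    fun c => Pi.single i0 (lam - C c) + Pi.single i1 (C c) with hlfun
  have hdeg : ∀ c i, ((lfun c) i).degree ≤ 1 := by
    intro c i
    have h01 : (0 : WithBot ℕ) ≤ 1 := by decide
    simp only [hlfun, Pi.add_apply]
    rcases eq_or_ne i i0 with rfl | h0
    · rw [Pi.single_eq_same, Pi.single_eq_of_ne hne.symm, add_zero]
      exact (degree_sub_le _ _).trans (max_le hlam (degree_C_le.trans h01))
    · rw [Pi.single_eq_of_ne h0]
      rcases eq_or_ne i i1 with rfl | h1
      · rw [Pi.single_eq_same, zero_add]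
        exact degree_C_le.trans h01
      · rw [Pi.single_eq_of_ne h1, add_zero]
        simp
  have hsum : ∀ c, ∑ i, lfun c i = lam := by
    intro c
    simp [hlfun, Finset.sum_add_distrib, Finset.sum_pi_single]
  have hval1 : ∀ c, lfun c i1 = C c := by
    intro c
    simp [hlfun, Pi.single_eq_of_ne hne, Pi.single_eq_same]
  have linj : Function.Injective lfun := by
    intro c c' h
    have := congrFun h i1
    rw [hval1, hval1] at this
    exact C_injective this
  refine ⟨?_, fun l _ hs => aux15_prod N lam m l hs, ?_⟩
  · exact Set.infinite_of_injective_forall_mem linj (fun c => ⟨hdeg c, hsum c⟩)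
  · refine Set.infinite_of_injective_forall_mem
      (f := fun c : ℝ => fun i => dpoly N (lfun c i)) ?_ ?_
    · intro c c' h
      have h2 : dpoly N (lfun c i1) = dpoly N (lfun c' i1) := congrFun h i1
      rw [hval1, hval1] at h2
      exact C_injective (aux15_dpoly_inj N _ _ h2)
    · intro c
      exact ⟨fun i => aux15_monic N _ hN hNdeg (hdeg c i), (aux15_prod N lam m _ (hsum c)).symm⟩

end
end

section
/- Let M = P + εD ∈ 𝔻ℍ[t] such that ∏ᵢ Nᵢ^{nᵢ−1} divides P·conj(D) + D·conj(P), where N(P) = ∏ᵢ Nᵢ^{nᵢ} with Nᵢ coprime irreducible real quadratics. Then for every x₀ ∈ ℝ and pure quaternion x, the real polynomial N(P x conj(P) + x₀(P·conj(D) − D·conj(P))) is divisible by ∏_{i : nᵢ > 1} Nᵢ^{nᵢ}. -/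
open Polynomial TrivSqZeroExt Quaternion

noncomputable section

/-!
Conjugation acts coefficientwise on `ℍ[t]`, and self-conjugate polynomials have real
coefficients, so they are central; the argument works in any star ring with this property.
Write the dual part of the trajectory as `T = C + x₀ S` with `C = P x P̄`, `S = P D̄ - D P̄`, and
let `A = P D̄ + D P̄ = R w`, where `R = ∏ Nᵢ^(nᵢ-1)`. In `T T̄` the terms `C C̄` and `C S̄ + S C̄`
are multiples of `N(P) = P P̄`, the latter because `x P̄ D + D̄ P x̄` is self-conjugate and hence
central, while `S S̄ = 2 (P D̄ D P̄ + D P̄ P D̄) - A Ā = 4 N(P) N(D) - R² N(w)`. Each `Nᵢ^nᵢ` with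
`nᵢ > 1` divides both `N(P)` and `R²`.
-/

namespace Polynomial

variable {R : Type*} [Semiring R]

theorem commute_of_coeff_commute {p q : R[X]} (h : ∀ i j, Commute (p.coeff i) (q.coeff j)) :
    Commute p q := by
  rw [p.as_sum_support_C_mul_X_pow]
  refine Commute.sum_left _ _ _ fun i _ => Commute.mul_left ?_ (commute_X_pow q i)
  refine ext fun k => ?_
  rw [coeff_C_mul, coeff_mul_C]
  exact h i k

variable [StarRing R]

instance : Star R[X] where
  star p := ∑ i ∈ p.support, C (star (p.coeff i)) * X ^ i

theorem coeff_star (p : R[X]) (k : ℕ) : (star p).coeff k = star (p.coeff k) := by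
  change (∑ i ∈ p.support, C (star (p.coeff i)) * X ^ i).coeff k = _
  simp only [finsetSum_coeff, coeff_C_mul_X_pow]
  rw [Finset.sum_ite_eq]
  split_ifs with h
  · rfl
  · rw [notMem_support_iff.mp h, star_zero]

instance : StarRing R[X] where
  star_involutive p := ext fun k => by rw [coeff_star, coeff_star, star_star]
  star_mul p q := ext fun k => by
    rw [coeff_star, coeff_mul, coeff_mul, star_sum,
      ← Finset.HasAntidiagonal.map_prodComm_antidiagonal (n := k), Finset.sum_map]
    simp [coeff_star]
  star_add p q := ext fun k => by simp only [coeff_star, coeff_add, star_add]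

end Polynomial

namespace Quaternion

variable {R : Type*} [CommRing R]

theorem isSelfAdjoint_map_algebraMap (g : R[X]) : IsSelfAdjoint (g.map (algebraMap R ℍ[R])) :=
  Polynomial.ext fun k => by
    rw [coeff_star, coeff_map]
    exact star_coe _

theorem polynomial_commute_of_isSelfAdjoint [NoZeroDivisors R] [CharZero R] {p : ℍ[R][X]}
    (hp : IsSelfAdjoint p) (q : ℍ[R][X]) : Commute p q :=
  commute_of_coeff_commute fun i j => by
    have hi : star (p.coeff i) = p.coeff i := by rw [← coeff_star, hp.star_eq]
    rw [star_eq_self.mp hi]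
    exact coe_commutes _ _

end Quaternion

theorem dvd_mul_of_commute_of_dvd {M : Type*} [Monoid M] {c q y : M} (hcq : Commute c q)
    (h : q ∣ y) : q ∣ c * y := by
  obtain ⟨k, rfl⟩ := h
  exact ⟨c * k, by rw [← mul_assoc, hcq.eq, mul_assoc]⟩

section SelfAdjointCentral

variable {R : Type*} [Ring R] [StarRing R]

theorem star_mul_self_eq_mul_star_self (hR : ∀ a : R, IsSelfAdjoint a → ∀ b, Commute a b)
    (p : R) : star p * p = p * star p := by
  have h := (hR _ (IsSelfAdjoint.add_star_self p) p).eq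
  rw [add_mul, mul_add] at h
  exact add_left_cancel h

theorem dvd_sandwich_mul_star (hR : ∀ a : R, IsSelfAdjoint a → ∀ b, Commute a b) {p q : R}
    (hq : q ∣ p * star p) (x : R) : q ∣ p * x * star p * star (p * x * star p) := by
  have e : p * x * star p * star (p * x * star p) = p * star p * (p * x * star x * star p) :=
    calc p * x * star p * star (p * x * star p) = p * x * (star p * p) * star x * star p := by
          simp only [star_mul, star_star]; noncomm_ring
      _ = p * star p * (p * x) * star x * star p := by
          rw [star_mul_self_eq_mul_star_self hR, ← (hR _ (.mul_star_self p) (p * x)).eq]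
      _ = _ := by noncomm_ring
  rw [e]
  exact dvd_mul_of_dvd_left hq _

theorem dvd_sandwich_mul_star_add (hR : ∀ a : R, IsSelfAdjoint a → ∀ b, Commute a b)
    {p q : R} (hq : q ∣ p * star p) (x d : R) :
    q ∣ p * x * star p * star (p * star d - d * star p) +
      (p * star d - d * star p) * star (p * x * star p) := by
  set v := x * star p * d + star d * p * star x
  have hv : IsSelfAdjoint v := by
    simp only [v, IsSelfAdjoint, star_add, star_mul, star_star, mul_assoc, add_comm]
  have hn := hR _ (.mul_star_self p)
  have e : p * x * star p * star (p * star d - d * star p) +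
      (p * star d - d * star p) * star (p * x * star p) =
      p * star p * (v - p * x * star d - d * star x * star p) :=
    calc _ = p * v * star p - p * x * (star p * p) * star d
            - d * (star p * p) * star x * star p := by
          simp only [v, star_sub, star_mul, star_star]; noncomm_ring
      _ = v * (p * star p) - p * x * (p * star p) * star d
            - d * (p * star p) * star x * star p := by
          rw [star_mul_self_eq_mul_star_self hR, ← (hR v hv p).eq, mul_assoc v]
      _ = _ := by rw [← (hn v).eq, ← (hn (p * x)).eq, ← (hn d).eq]; noncomm_ring
  rw [e]
  exact dvd_mul_of_dvd_left hq _

theorem dvd_sub_mul_star (hR : ∀ a : R, IsSelfAdjoint a → ∀ b, Commute a b) {p d q r : R}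
    (hr : IsSelfAdjoint r) (hq : q ∣ p * star p) (hqr : q ∣ r * r)
    (hrA : r ∣ p * star d + d * star p) :
    q ∣ (p * star d - d * star p) * star (p * star d - d * star p) := by
  obtain ⟨w, hw⟩ := hrA
  have hn := hR _ (.mul_star_self p)
  have hAA : (p * star d + d * star p) * star (p * star d + d * star p) =
      r * r * (w * star w) :=
    calc _ = r * (w * star w * r) := by rw [hw, star_mul, hr.star_eq]; noncomm_ring
      _ = _ := by rw [← (hR r hr _).eq, mul_assoc]
  have hBB' : p * star d * (d * star p) = p * star p * (star d * d) :=
    calc _ = p * (star d * d) * star p := by noncomm_ring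
      _ = _ := by
          rw [← (hR _ (.star_mul_self d) p).eq, mul_assoc (star d * d),
            (hR _ (.star_mul_self d) _).eq]
  have hB'B : d * star p * (p * star d) = p * star p * (d * star d) :=
    calc _ = d * (star p * p) * star d := by noncomm_ring
      _ = _ := by rw [star_mul_self_eq_mul_star_self hR, ← (hn d).eq, mul_assoc]
  have e : (p * star d - d * star p) * star (p * star d - d * star p) =
      p * star d * (d * star p) + p * star d * (d * star p) +
        (d * star p * (p * star d) + d * star p * (p * star d)) -
      (p * star d + d * star p) * star (p * star d + d * star p) := by
    simp only [star_sub, star_add, star_mul, star_star]; noncomm_ring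
  rw [e, hAA, hBB', hB'B]
  exact dvd_sub (dvd_add (dvd_add (dvd_mul_of_dvd_left hq _) (dvd_mul_of_dvd_left hq _))
    (dvd_add (dvd_mul_of_dvd_left hq _) (dvd_mul_of_dvd_left hq _))) (dvd_mul_of_dvd_left hqr _)

theorem dvd_trajectory_mul_star (hR : ∀ a : R, IsSelfAdjoint a → ∀ b, Commute a b)
    {p d q r c : R} (hc : IsSelfAdjoint c) (hr : IsSelfAdjoint r) (hq : q ∣ p * star p)
    (hqr : q ∣ r * r) (hrA : r ∣ p * star d + d * star p) (x : R) :
    q ∣ (p * x * star p + c * (p * star d - d * star p)) *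
      star (p * x * star p + c * (p * star d - d * star p)) := by
  set C₁ := p * x * star p
  set S := p * star d - d * star p
  have hcq : Commute c q := hR c hc q
  have e : (C₁ + c * S) * star (C₁ + c * S) =
      C₁ * star C₁ + c * (C₁ * star S + S * star C₁) + c * (c * (S * star S)) :=
    calc _ = C₁ * star C₁ + C₁ * star S * c + c * (S * star C₁) + c * (S * star S) * c := by
          rw [star_add, star_mul c S, hc.star_eq]; noncomm_ring
      _ = _ := by
          rw [← (hR c hc (C₁ * star S)).eq, ← (hR c hc (c * (S * star S))).eq]; noncomm_ring
  rw [e]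
  exact dvd_add (dvd_add (dvd_sandwich_mul_star hR hq x)
    (dvd_mul_of_commute_of_dvd hcq (dvd_sandwich_mul_star_add hR hq x d)))
    (dvd_mul_of_commute_of_dvd hcq
      (dvd_mul_of_commute_of_dvd hcq (dvd_sub_mul_star hR hr hq hqr hrA)))

end SelfAdjointCentral

theorem Finset.prod_filter_one_lt_pow_dvd_mul_self_prod_pow_sub_one {ι M : Type*}
    [CommMonoid M] (s : Finset ι) (f : ι → M) (n : ι → ℕ) :
    ∏ i ∈ s.filter (fun i => 1 < n i), f i ^ n i ∣
      (∏ i ∈ s, f i ^ (n i - 1)) * ∏ i ∈ s, f i ^ (n i - 1) := by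
  rw [← Finset.prod_mul_distrib]
  refine (Finset.prod_dvd_prod_of_dvd _ _ fun i hi => ?_).trans
    (Finset.prod_dvd_prod_of_subset _ _ _ (Finset.filter_subset _ s))
  rw [← pow_add]
  exact pow_dvd_pow _ (by have := (Finset.mem_filter.mp hi).2; omega)

theorem qpconj_eq_star (P : HH[X]) : qpconj P = star P := rfl

theorem stmt18_general (P D : Polynomial HH) (m : ℕ) (N : Fin m → Polynomial ℝ) (n : Fin m → ℕ)
    (hNP : P * qpconj P = (∏ i, N i ^ n i).map (algebraMap ℝ HH))
    (hdvd : (∏ i, N i ^ (n i - 1)).map (algebraMap ℝ HH) ∣ (P * qpconj D + D * qpconj P)) :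
    ∀ (x₀ : ℝ) (x : HH), x.re = 0 →
      (∏ i ∈ Finset.univ.filter (fun i => 1 < n i), N i ^ n i).map (algebraMap ℝ HH) ∣
        ((P * C x * qpconj P + x₀ • (P * qpconj D - D * qpconj P)) *
          qpconj (P * C x * qpconj P + x₀ • (P * qpconj D - D * qpconj P))) := by
  intro x₀ x _
  simp only [qpconj_eq_star] at hNP hdvd ⊢
  have hsmul : x₀ • (P * star D - D * star P) =
      (C x₀).map (algebraMap ℝ HH) * (P * star D - D * star P) := by
    rw [Polynomial.map_C, Algebra.smul_def, Polynomial.algebraMap_apply]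
  rw [hsmul]
  refine dvd_trajectory_mul_star (fun _ => Quaternion.polynomial_commute_of_isSelfAdjoint)
    (Quaternion.isSelfAdjoint_map_algebraMap _) (Quaternion.isSelfAdjoint_map_algebraMap _)
    ?_ ?_ hdvd (C x)
  · exact hNP ▸ Polynomial.map_dvd _
      (Finset.prod_dvd_prod_of_subset _ _ _ (Finset.filter_subset _ _))
  · rw [← Polynomial.map_mul]
    exact Polynomial.map_dvd _ (Finset.prod_filter_one_lt_pow_dvd_mul_self_prod_pow_sub_one _ _ _)

/-- If ∏ Nᵢ^{nᵢ−1} divides P·conj(D) + D·conj(P), then for every point x₀ + εx the norm of the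
dual part of its trajectory is divisible by ∏_{nᵢ>1} Nᵢ^{nᵢ}. -/
theorem stmt18 (P D : Polynomial HH) (m : ℕ) (N : Fin m → Polynomial ℝ) (n : Fin m → ℕ)
    (hmon : ∀ i, (N i).Monic) (hirr : ∀ i, Irreducible (N i)) (hdeg : ∀ i, (N i).degree = 2)
    (hcop : ∀ i j, i ≠ j → IsCoprime (N i) (N j)) (hn : ∀ i, 0 < n i)
    (hNP : P * qpconj P = (∏ i, N i ^ n i).map (algebraMap ℝ HH))
    (hdvd : (∏ i, N i ^ (n i - 1)).map (algebraMap ℝ HH) ∣ (P * qpconj D + D * qpconj P)) :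
    ∀ (x₀ : ℝ) (x : HH), x.re = 0 →
      (∏ i ∈ Finset.univ.filter (fun i => 1 < n i), N i ^ n i).map (algebraMap ℝ HH) ∣
        ((P * C x * qpconj P + x₀ • (P * qpconj D - D * qpconj P)) *
          qpconj (P * C x * qpconj P + x₀ • (P * qpconj D - D * qpconj P))) :=
  stmt18_general P D m N n hNP hdvd
end
end
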